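/- Let 1 ≤ r ≤ n. Let V₁ be an improper vote whose row j has entries 1 in columns b and c and entry −1 in column a, where a, b, c are distinct candidates in {1,…,n}, and let V₂ be a proper vote with entry 1 at cell (j', a) for some position j' ≠ j and entry 1 at cell (j, d) for some candidate d ≠ a. Then there exist an improper vote V₁' and a proper vote V₂' with V₁' + V₂' = V₁ + V₂ such that V₁' has entry 1 at cell (j', a), and row j of V₁' has entry −1 in column a and entries 1 in exactly two columns forming one of the sets {b,c}, {b,d}, or {c,d}. -/

import Mathlib

/-!
Write row `i ≠ j` of `V₁` as the unit vector at `σ i` and row `i` of `V₂` as the unit vector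
at `τ i`, so `τ` is injective with `τ j = d` and `τ j' = a`. The new proper vote is the
unit-row matrix of an injection `t` with `t i ∈ {σ i, τ i}` for `i ≠ j` and `t j ∈ {b, c, d}`,
and we take `t i = σ i` exactly on a set `S` of rows containing `j'`. When `σ x = τ y` the
column is covered correctly only if `x` and `y` lie both in `S` or both outside it, so `S` must
be a union of classes of the relation generated by these pairs; as `σ` and `τ` are injective
away from column `a`, the classes are paths and cycles. What remains are constraints at path
ends: the rows `τ⁻¹ b`, `τ⁻¹ c` and `j'` can only start a path, the rows of `σ⁻¹ a` and
`σ⁻¹ d` can only end one, and a short case analysis on how these ends are joined selects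
`S` and `t j`.
-/

/-- A proper vote: an `r × n` integer matrix with all entries in `{0,1}`, every row sum
equal to `1`, and every column sum equal to `0` or `1`. -/
def IsProperVote (r n : ℕ) (V : Matrix (Fin r) (Fin n) ℤ) : Prop :=
  (∀ j k, V j k = 0 ∨ V j k = 1) ∧
  (∀ j, ∑ k, V j k = 1) ∧
  (∀ k, ∑ j, V j k = 0 ∨ ∑ j, V j k = 1)

/-- An improper vote: an `r × n` integer matrix with every row sum equal to `1`, every
column sum equal to `0` or `1`, exactly one entry equal to `-1`, and all other entries
in `{0,1}`. -/
def IsImproperVote (r n : ℕ) (V : Matrix (Fin r) (Fin n) ℤ) : Prop :=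
  (∀ j, ∑ k, V j k = 1) ∧
  (∀ k, ∑ j, V j k = 0 ∨ ∑ j, V j k = 1) ∧
  (∃ j' k', V j' k' = -1 ∧ ∀ j k, (j, k) ≠ (j', k') → V j k = 0 ∨ V j k = 1)

open Function Finset Relation

theorem eq_or_eq_of_eq_or_eq {α : Type*} {u v w p q : α} (hu : u = p ∨ u = q)
    (hv : v = p ∨ v = q) (hw : w = p ∨ w = q) (hvw : v ≠ w) : u = v ∨ u = w := by
  rcases hu with rfl | rfl <;> rcases hv with rfl | rfl <;> rcases hw with rfl | rfl <;>
    simp_all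

namespace Relation

variable {α : Type*} {R : α → α → Prop} {x y : α}

theorem ReflTransGen.eq_of_forall_not_rel_to (h : ReflTransGen R x y) (hy : ∀ w, ¬ R w y) :
    x = y := by
  rcases h.cases_tail with rfl | ⟨w, -, hw⟩
  · rfl
  · exact absurd hw (hy w)

theorem ReflTransGen.eq_of_forall_not_rel_from (h : ReflTransGen R x y) (hx : ∀ w, ¬ R x w) :
    x = y := by
  rcases h.cases_head with rfl | ⟨w, hw, -⟩
  · rfl
  · exact absurd hw (hx w)

theorem EqvGen.reflTransGen_or_reflTransGen (hr : Relator.RightUnique R)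
    (hl : Relator.LeftUnique R) (h : EqvGen R x y) :
    ReflTransGen R x y ∨ ReflTransGen R y x := by
  have hl' : Relator.RightUnique (swap R) := fun _ _ _ h₁ h₂ => hl h₁ h₂
  induction h with
  | rel _ _ h => exact .inl (.single h)
  | refl => exact .inl .refl
  | symm _ _ _ ih => exact ih.symm
  | trans x y z _ _ ih₁ ih₂ =>
    rcases ih₁ with hxy | hyx <;> rcases ih₂ with hyz | hzy
    · exact .inl (hxy.trans hyz)
    · have := ReflTransGen.total_of_right_unique hl'
        (reflTransGen_swap.mpr hxy) (reflTransGen_swap.mpr hzy)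
      exact this.symm.imp reflTransGen_swap.mp reflTransGen_swap.mp
    · exact ReflTransGen.total_of_right_unique hr hyx hyz
    · exact .inr (hzy.trans hyx)

theorem EqvGen.eq_of_forall_not_rel_to (hr : Relator.RightUnique R)
    (hl : Relator.LeftUnique R) (h : EqvGen R x y) (hx : ∀ w, ¬ R w x)
    (hy : ∀ w, ¬ R w y) : x = y :=
  (h.reflTransGen_or_reflTransGen hr hl).elim (·.eq_of_forall_not_rel_to hy)
    (fun h => (h.eq_of_forall_not_rel_to hx).symm)

theorem EqvGen.eq_of_forall_not_rel_from (hr : Relator.RightUnique R)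
    (hl : Relator.LeftUnique R) (h : EqvGen R x y) (hx : ∀ w, ¬ R x w)
    (hy : ∀ w, ¬ R y w) : x = y :=
  (h.reflTransGen_or_reflTransGen hr hl).elim (·.eq_of_forall_not_rel_from hx)
    (fun h => (h.eq_of_forall_not_rel_from hy).symm)

end Relation

section Exchange

variable {ι κ : Type*} {σ τ : ι → κ} {j j' : ι} {a b c d : κ}

/-- Rows `x` and `y` share the column `σ x = τ y`: an exchange swaps both of them or neither. -/
def chainStep (σ τ : ι → κ) (j j' : ι) (x y : ι) : Prop :=
  σ x = τ y ∧ x ≠ j ∧ y ≠ j ∧ y ≠ j'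

def Linked (σ τ : ι → κ) (j j' : ι) : ι → ι → Prop :=
  EqvGen (chainStep σ τ j j')

def linkedSet (σ τ : ι → κ) (j j' : ι) (seeds : Set ι) : Set ι :=
  {x | ∃ s ∈ seeds, Linked σ τ j j' s x}

def fiberOff (σ : ι → κ) (j : ι) (k : κ) : Set ι :=
  {x | x ≠ j ∧ σ x = k}

theorem Linked.symm {x y : ι} (h : Linked σ τ j j' x y) : Linked σ τ j j' y x :=
  EqvGen.symm _ _ h

theorem Linked.trans {x y z : ι} (h₁ : Linked σ τ j j' x y) (h₂ : Linked σ τ j j' y z) :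
    Linked σ τ j j' x z :=
  EqvGen.trans _ _ _ h₁ h₂

theorem Linked.eq_j_iff {x y : ι} (h : Linked σ τ j j' x y) : x = j ↔ y = j := by
  induction h with
  | rel _ _ h => exact ⟨fun hx => absurd hx h.2.1, fun hy => absurd hy h.2.2.1⟩
  | refl => rfl
  | symm _ _ _ ih => exact ih.symm
  | trans _ _ _ _ _ ih₁ ih₂ => exact ih₁.trans ih₂

theorem mem_linkedSet {seeds : Set ι} {x : ι} :
    x ∈ linkedSet σ τ j j' seeds ↔ ∃ s ∈ seeds, Linked σ τ j j' s x :=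
  Iff.rfl

theorem mem_linkedSet_of_mem {seeds : Set ι} {s : ι} (hs : s ∈ seeds) :
    s ∈ linkedSet σ τ j j' seeds :=
  ⟨s, hs, EqvGen.refl s⟩

theorem ne_of_mem_linkedSet {seeds : Set ι} {x : ι} (hj : j ∉ seeds)
    (hx : x ∈ linkedSet σ τ j j' seeds) : x ≠ j := by
  obtain ⟨s, hs, hsx⟩ := hx
  exact fun hxj => hj (hsx.eq_j_iff.mpr hxj ▸ hs)

theorem mem_linkedSet_iff_of_chainStep {seeds : Set ι} {x y : ι}
    (hxy : chainStep σ τ j j' x y) :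
    x ∈ linkedSet σ τ j j' seeds ↔ y ∈ linkedSet σ τ j j' seeds :=
  have hl : Linked σ τ j j' x y := EqvGen.rel _ _ hxy
  ⟨fun ⟨s, hs, hsx⟩ => ⟨s, hs, hsx.trans hl⟩, fun ⟨s, hs, hsy⟩ => ⟨s, hs, hsy.trans hl.symm⟩⟩

variable (σ τ j j' a b c d) in
/-- `σ i` and `τ i` are the columns of the units in row `i` of the improper and of the proper
vote (`σ j` is meaningless), and `a` is the column of the `-1` in row `j`. -/
structure ExchangeSetup : Prop where
  injective_τ : Injective τ
  τ_j : τ j = d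
  τ_j' : τ j' = a
  j'_ne_j : j' ≠ j
  a_ne_b : a ≠ b
  a_ne_c : a ≠ c
  b_ne_c : b ≠ c
  σ_ne_b : ∀ x, x ≠ j → σ x ≠ b
  σ_ne_c : ∀ x, x ≠ j → σ x ≠ c
  σ_injOn : ∀ x y, x ≠ j → y ≠ j → σ x = σ y → σ x ≠ a → x = y
  nonempty_fiberOff_a : (fiberOff σ j a).Nonempty

variable (σ τ j j' a b c d) in
/-- The rows in `S` give their `σ`-unit to the new proper vote, the other rows `i ≠ j` their
`τ`-unit, and row `j` the unit at `z`. -/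
structure IsSwapSet (S : Set ι) (z : κ) : Prop where
  j_notMem : j ∉ S
  j'_mem : j' ∈ S
  mem_iff_of_chainStep : ∀ x y, chainStep σ τ j j' x y → (x ∈ S ↔ y ∈ S)
  z_spec : z = d ∨ ((z = b ∨ z = c) ∧ d ≠ b ∧ d ≠ c)
  mem_iff_of_bc : ∀ y, y ≠ j → (τ y = b ∨ τ y = c) → (y ∈ S ↔ τ y = z)
  mem_iff_of_σ_d : ∀ x, x ≠ j → σ x = d → (x ∈ S ↔ z ≠ d)
  subsingleton_a : (S ∩ fiberOff σ j a).Subsingleton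
  nonempty_a : (fiberOff σ j a).Nontrivial → (S ∩ fiberOff σ j a).Nonempty

variable (σ τ j j' a b c d) in
/-- `t i` is the column of the unit in row `i` of the new proper vote; every column holding a
`1` of both old votes must receive it. -/
structure IsExchangeChoice (t : ι → κ) : Prop where
  injective : Injective t
  apply_j' : t j' = σ j'
  apply_of_ne : ∀ i, i ≠ j → t i = σ i ∨ t i = τ i
  apply_j : t j = d ∨ ((t j = b ∨ t j = c) ∧ d ≠ b ∧ d ≠ c)
  τ_mem_range_of_bc : ∀ y, τ y = b ∨ τ y = c → τ y ∈ Set.range t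
  τ_mem_range_of_σ : ∀ x y, x ≠ j → σ x = τ y → τ y ≠ a → τ y ∈ Set.range t
  a_mem_range : (fiberOff σ j a).Nontrivial → a ∈ Set.range t

namespace ExchangeSetup

theorem rightUnique (h : ExchangeSetup σ τ j j' a b c d) :
    Relator.RightUnique (chainStep σ τ j j') :=
  fun _ _ _ h₁ h₂ => h.injective_τ (h₁.1.symm.trans h₂.1)

theorem leftUnique (h : ExchangeSetup σ τ j j' a b c d) :
    Relator.LeftUnique (chainStep σ τ j j') := by
  rintro x y z ⟨hxz, hx, -, hz⟩ ⟨hyz, hy, -, -⟩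
  refine h.σ_injOn x y hx hy (hxz.trans hyz.symm) ?_
  rw [hxz, ← h.τ_j']
  exact fun hz' => hz (h.injective_τ hz')

theorem d_ne_a (h : ExchangeSetup σ τ j j' a b c d) : d ≠ a := by
  rw [← h.τ_j, ← h.τ_j']
  exact h.injective_τ.ne h.j'_ne_j.symm

theorem not_chainStep_of_bc (h : ExchangeSetup σ τ j j' a b c d) {y : ι} (hy : τ y = b ∨ τ y = c)
    (w : ι) :
    ¬ chainStep σ τ j j' w y := by
  rintro ⟨hw, hwj, -, -⟩
  rcases hy with hy | hy
  · exact h.σ_ne_b w hwj (hw.trans hy)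
  · exact h.σ_ne_c w hwj (hw.trans hy)

theorem not_chainStep_of_σ (h : ExchangeSetup σ τ j j' a b c d) {x : ι} (hx : σ x = a ∨ σ x = d)
    (w : ι) :
    ¬ chainStep σ τ j j' x w := by
  rintro ⟨hxw, -, hwj, hwj'⟩
  rcases hx with hx | hx
  · exact hwj' (h.injective_τ (hxw.symm.trans (hx.trans h.τ_j'.symm)))
  · exact hwj (h.injective_τ (hxw.symm.trans (hx.trans h.τ_j.symm)))

theorem eq_of_linked_of_bc (h : ExchangeSetup σ τ j j' a b c d) {x y : ι}
    (hx : τ x = b ∨ τ x = c) (hy : τ y = b ∨ τ y = c)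
    (hxy : Linked σ τ j j' x y) : x = y :=
  EqvGen.eq_of_forall_not_rel_to h.rightUnique h.leftUnique hxy (h.not_chainStep_of_bc hx)
    (h.not_chainStep_of_bc hy)

theorem eq_of_linked_of_σ (h : ExchangeSetup σ τ j j' a b c d) {x y : ι}
    (hx : σ x = a ∨ σ x = d) (hy : σ y = a ∨ σ y = d)
    (hxy : Linked σ τ j j' x y) : x = y :=
  EqvGen.eq_of_forall_not_rel_from h.rightUnique h.leftUnique hxy (h.not_chainStep_of_σ hx)
    (h.not_chainStep_of_σ hy)

theorem not_linked_j'_of_bc (h : ExchangeSetup σ τ j j' a b c d) {y : ι} (hy : τ y = b ∨ τ y = c) :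
    ¬ Linked σ τ j j' j' y := by
  intro hl
  have hj'y : j' = y := EqvGen.eq_of_forall_not_rel_to h.rightUnique h.leftUnique hl
    (fun _ hw => hw.2.2.2 rfl) (h.not_chainStep_of_bc hy)
  rw [← hj'y, h.τ_j'] at hy
  exact hy.elim h.a_ne_b h.a_ne_c

end ExchangeSetup

open Classical in
noncomputable def swapChoice (σ τ : ι → κ) (j : ι) (S : Set ι) (z : κ) (i : ι) : κ :=
  if i = j then z else if i ∈ S then σ i else τ i

section swapChoice

variable {S : Set ι} {z : κ} {i : ι}

theorem swapChoice_self : swapChoice σ τ j S z j = z := if_pos rfl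

theorem swapChoice_of_mem (hi : i ≠ j) (hiS : i ∈ S) : swapChoice σ τ j S z i = σ i := by
  simp [swapChoice, hi, hiS]

theorem swapChoice_of_notMem (hi : i ≠ j) (hiS : i ∉ S) : swapChoice σ τ j S z i = τ i := by
  simp [swapChoice, hi, hiS]

end swapChoice

namespace IsSwapSet

variable {S : Set ι} {z : κ}

theorem swapChoice_ne (hS : IsSwapSet σ τ j j' a b c d S z)
    (h : ExchangeSetup σ τ j j' a b c d) {i : ι} (hi : i ≠ j) : swapChoice σ τ j S z i ≠ z := by
  by_cases hiS : i ∈ S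
  · rw [swapChoice_of_mem hi hiS]
    intro hσ
    rcases hS.z_spec with rfl | ⟨rfl | rfl, -⟩
    · exact (hS.mem_iff_of_σ_d i hi hσ).mp hiS rfl
    · exact h.σ_ne_b i hi hσ
    · exact h.σ_ne_c i hi hσ
  · rw [swapChoice_of_notMem hi hiS]
    intro hτ
    rcases hS.z_spec with rfl | ⟨hz, -⟩
    · exact hi (h.injective_τ (hτ.trans h.τ_j.symm))
    · exact hiS ((hS.mem_iff_of_bc i hi (hτ ▸ hz)).mpr hτ)

theorem σ_ne_τ (hS : IsSwapSet σ τ j j' a b c d S z) {x y : ι} (hx : x ≠ j) (hxS : x ∈ S)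
    (hy : y ≠ j) (hyS : y ∉ S) : σ x ≠ τ y :=
  fun he => hyS ((hS.mem_iff_of_chainStep x y
    ⟨he, hx, hy, fun hy' => hyS (hy' ▸ hS.j'_mem)⟩).mp hxS)

theorem injective_swapChoice (hS : IsSwapSet σ τ j j' a b c d S z)
    (h : ExchangeSetup σ τ j j' a b c d) :
    Injective (swapChoice σ τ j S z) := by
  intro x y hxy
  by_cases hx : x = j <;> by_cases hy : y = j
  · exact hx.trans hy.symm
  · rw [hx, swapChoice_self] at hxy
    exact absurd hxy.symm (hS.swapChoice_ne h hy)
  · rw [hy, swapChoice_self] at hxy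
    exact absurd hxy (hS.swapChoice_ne h hx)
  by_cases hxS : x ∈ S <;> by_cases hyS : y ∈ S
  · rw [swapChoice_of_mem hx hxS, swapChoice_of_mem hy hyS] at hxy
    by_cases hxa : σ x = a
    · exact hS.subsingleton_a ⟨hxS, hx, hxa⟩ ⟨hyS, hy, hxy ▸ hxa⟩
    · exact h.σ_injOn x y hx hy hxy hxa
  · rw [swapChoice_of_mem hx hxS, swapChoice_of_notMem hy hyS] at hxy
    exact absurd hxy (hS.σ_ne_τ hx hxS hy hyS)
  · rw [swapChoice_of_notMem hx hxS, swapChoice_of_mem hy hyS] at hxy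
    exact absurd hxy.symm (hS.σ_ne_τ hy hyS hx hxS)
  · rw [swapChoice_of_notMem hx hxS, swapChoice_of_notMem hy hyS] at hxy
    exact h.injective_τ hxy

theorem isExchangeChoice (hS : IsSwapSet σ τ j j' a b c d S z)
    (h : ExchangeSetup σ τ j j' a b c d) :
    IsExchangeChoice σ τ j j' a b c d (swapChoice σ τ j S z) where
  injective := hS.injective_swapChoice h
  apply_j' := swapChoice_of_mem h.j'_ne_j hS.j'_mem
  apply_of_ne i hi := by
    by_cases hiS : i ∈ S
    · exact .inl (swapChoice_of_mem hi hiS)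
    · exact .inr (swapChoice_of_notMem hi hiS)
  apply_j := swapChoice_self (τ := τ) (σ := σ) ▸ hS.z_spec
  τ_mem_range_of_bc y hy := by
    by_cases hyj : y = j
    · rw [hyj, h.τ_j] at hy ⊢
      have hz : z = d := hS.z_spec.resolve_right fun ⟨_, hdb, hdc⟩ => hy.elim hdb hdc
      exact ⟨j, by rw [swapChoice_self, hz]⟩
    by_cases hyS : y ∈ S
    · exact ⟨j, by rw [swapChoice_self, (hS.mem_iff_of_bc y hyj hy).mp hyS]⟩
    · exact ⟨y, swapChoice_of_notMem hyj hyS⟩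
  τ_mem_range_of_σ x y hx hxy hya := by
    by_cases hyj : y = j
    · rw [hyj, h.τ_j] at hxy ⊢
      by_cases hxS : x ∈ S
      · exact ⟨x, by rw [swapChoice_of_mem hx hxS, hxy]⟩
      · exact ⟨j, by
          rw [swapChoice_self]
          exact not_not.mp (mt (hS.mem_iff_of_σ_d x hx hxy).mpr hxS)⟩
    have hstep : chainStep σ τ j j' x y := ⟨hxy, hx, hyj, fun hy => hya (hy ▸ h.τ_j')⟩
    by_cases hyS : y ∈ S
    · exact ⟨x, by rw [swapChoice_of_mem hx ((hS.mem_iff_of_chainStep x y hstep).mpr hyS), hxy]⟩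
    · exact ⟨y, swapChoice_of_notMem hyj hyS⟩
  a_mem_range ha := by
    obtain ⟨x, hxS, hxj, hxa⟩ := hS.nonempty_a ha
    exact ⟨x, by rw [swapChoice_of_mem hxj hxS, hxa]⟩

end IsSwapSet

theorem isSwapSet_linkedSet {seeds : Set ι} {z : κ} (hj : j ∉ seeds) (hj' : j' ∈ seeds)
    (hz : z = d ∨ ((z = b ∨ z = c) ∧ d ≠ b ∧ d ≠ c))
    (hbc : ∀ y, y ≠ j → (τ y = b ∨ τ y = c) → (y ∈ linkedSet σ τ j j' seeds ↔ τ y = z))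
    (hd : ∀ x, x ≠ j → σ x = d → (x ∈ linkedSet σ τ j j' seeds ↔ z ≠ d))
    (ha : (linkedSet σ τ j j' seeds ∩ fiberOff σ j a).Subsingleton)
    (ha' : (fiberOff σ j a).Nontrivial →
      (linkedSet σ τ j j' seeds ∩ fiberOff σ j a).Nonempty) :
    IsSwapSet σ τ j j' a b c d (linkedSet σ τ j j' seeds) z where
  j_notMem hjS := ne_of_mem_linkedSet hj hjS rfl
  j'_mem := mem_linkedSet_of_mem hj'
  mem_iff_of_chainStep _ _ := mem_linkedSet_iff_of_chainStep
  z_spec := hz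
  mem_iff_of_bc := hbc
  mem_iff_of_σ_d := hd
  subsingleton_a := ha
  nonempty_a := ha'

namespace ExchangeSetup

theorem isSwapSet_j' (h : ExchangeSetup σ τ j j' a b c d)
    (hd : ∀ x, Linked σ τ j j' j' x → σ x ≠ d)
    (ha : (fiberOff σ j a).Nontrivial → ∃ x ∈ fiberOff σ j a, Linked σ τ j j' j' x) :
    IsSwapSet σ τ j j' a b c d (linkedSet σ τ j j' {j'}) d := by
  have hS {x : ι} : x ∈ linkedSet σ τ j j' {j'} ↔ Linked σ τ j j' j' x := by
    simp [mem_linkedSet]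
  refine isSwapSet_linkedSet (by simpa using h.j'_ne_j.symm) rfl (.inl rfl) ?_ ?_ ?_ ?_
  · intro y hyj hy
    rw [hS]
    exact iff_of_false (h.not_linked_j'_of_bc hy)
      fun hyd => hyj (h.injective_τ (hyd.trans h.τ_j.symm))
  · intro x _ hx
    rw [hS]
    exact iff_of_false (fun hl => hd x hl hx) (· rfl)
  · rintro x ⟨hx, -, hxa⟩ y ⟨hy, -, hya⟩
    exact h.eq_of_linked_of_σ (.inl hxa) (.inl hya) ((hS.mp hx).symm.trans (hS.mp hy))
  · intro hnt
    obtain ⟨x, hx, hl⟩ := ha hnt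
    exact ⟨x, hS.mpr hl, hx⟩

theorem isSwapSet_j'_pair (h : ExchangeSetup σ τ j j' a b c d) {x₀ : ι}
    (hx₀ : x₀ ∈ fiberOff σ j a) (hd : ∀ x, Linked σ τ j j' j' x → σ x ≠ d)
    (ha : ∀ x ∈ fiberOff σ j a, ¬ Linked σ τ j j' j' x)
    (hbc : ∀ y, (τ y = b ∨ τ y = c) → ¬ Linked σ τ j j' y x₀) :
    IsSwapSet σ τ j j' a b c d (linkedSet σ τ j j' {j', x₀}) d := by
  have hS {x : ι} : x ∈ linkedSet σ τ j j' {j', x₀} ↔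
      Linked σ τ j j' j' x ∨ Linked σ τ j j' x₀ x := by
    simp [mem_linkedSet]
  have hx₀S {x : ι} (hx : x ∈ linkedSet σ τ j j' {j', x₀}) (hxa : σ x = a ∨ σ x = d) :
      x₀ = x := by
    rcases hS.mp hx with hl | hl
    · rcases hxa with hxa | hxa
      · exact absurd hl (ha x ⟨ne_of_mem_linkedSet (by simp [h.j'_ne_j.symm, hx₀.1.symm]) hx, hxa⟩)
      · exact absurd hxa (hd x hl)
    · exact h.eq_of_linked_of_σ (.inl hx₀.2) hxa hl
  refine isSwapSet_linkedSet (by simp [h.j'_ne_j.symm, hx₀.1.symm]) (by simp) (.inl rfl)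
    ?_ ?_ ?_ ?_
  · intro y hyj hy
    refine iff_of_false ?_ fun hyd => hyj (h.injective_τ (hyd.trans h.τ_j.symm))
    rintro hyS
    rcases hS.mp hyS with hl | hl
    · exact h.not_linked_j'_of_bc hy hl
    · exact hbc y hy hl.symm
  · intro x _ hx
    refine iff_of_false (fun hxS => h.d_ne_a ?_) (· rfl)
    rw [← hx, ← hx₀S hxS (.inr hx), hx₀.2]
  · rintro x ⟨hx, -, hxa⟩ y ⟨hy, -, hya⟩
    exact (hx₀S hx (.inl hxa)).symm.trans (hx₀S hy (.inl hya))
  · exact fun _ => ⟨x₀, hS.mpr (.inr (EqvGen.refl x₀)), hx₀⟩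

theorem isSwapSet_source (h : ExchangeSetup σ τ j j' a b c d) {x₀ y₀ : ι}
    (hdbc : d ≠ b ∧ d ≠ c) (hx₀ : x₀ ∈ fiberOff σ j a) (hy₀ : τ y₀ = b ∨ τ y₀ = c)
    (hl₀ : Linked σ τ j j' y₀ x₀) (ha : ∀ x ∈ fiberOff σ j a, ¬ Linked σ τ j j' j' x)
    (hbc : ∀ x ∈ fiberOff σ j d, ∀ y, (τ y = b ∨ τ y = c) → Linked σ τ j j' x y →
      τ y = τ y₀) :
    IsSwapSet σ τ j j' a b c d
      (linkedSet σ τ j j' (insert j' (insert y₀ (fiberOff σ j d)))) (τ y₀) := by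
  set S := linkedSet σ τ j j' (insert j' (insert y₀ (fiberOff σ j d)))
  have hS {x : ι} : x ∈ S ↔ Linked σ τ j j' j' x ∨ Linked σ τ j j' y₀ x ∨
      ∃ s ∈ fiberOff σ j d, Linked σ τ j j' s x := by
    simp [S, mem_linkedSet]
  have hy₀j : y₀ ≠ j := fun e => hx₀.1 (hl₀.eq_j_iff.mp e)
  have hjS : j ∉ insert j' (insert y₀ (fiberOff σ j d)) := by
    simp [h.j'_ne_j.symm, hy₀j.symm, fiberOff]
  refine isSwapSet_linkedSet hjS (by simp) (.inr ⟨hy₀, hdbc⟩) ?_ ?_ ?_ ?_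
  · intro y _ hy
    refine ⟨fun hyS => ?_, fun e => ?_⟩
    · rcases hS.mp hyS with hl | hl | ⟨s, hs, hl⟩
      · exact absurd hl (h.not_linked_j'_of_bc hy)
      · rw [h.eq_of_linked_of_bc hy₀ hy hl]
      · exact hbc s hs y hy hl
    · rw [h.injective_τ e]
      exact hS.mpr (.inr (.inl (EqvGen.refl y₀)))
  · intro x hxj hx
    refine iff_of_true (mem_linkedSet_of_mem (by simp [fiberOff, hxj, hx])) fun e => hy₀j ?_
    exact h.injective_τ (e.trans h.τ_j.symm)
  · suffices key : ∀ x ∈ S ∩ fiberOff σ j a, x = x₀ from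
      fun x hx y hy => (key x hx).trans (key y hy).symm
    rintro x ⟨hxS, hx⟩
    rcases hS.mp hxS with hl | hl | ⟨s, hs, hl⟩
    · exact absurd hl (ha x hx)
    · exact h.eq_of_linked_of_σ (.inl hx.2) (.inl hx₀.2) (hl.symm.trans hl₀)
    · have := h.eq_of_linked_of_σ (.inr hs.2) (.inl hx.2) hl
      exact absurd (hs.2.symm.trans (this ▸ hx.2)) h.d_ne_a
  · exact fun _ => ⟨x₀, hS.mpr (.inr (.inl hl₀)), hx₀⟩

theorem isSwapSet_two_sources (h : ExchangeSetup σ τ j j' a b c d) {x₁ x₂ y₁ y₂ : ι}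
    (hx₁ : x₁ ∈ fiberOff σ j a) (hx₂ : x₂ ∈ fiberOff σ j a) (hne : x₁ ≠ x₂)
    (hy₁ : τ y₁ = b ∨ τ y₁ = c) (hy₂ : τ y₂ = b ∨ τ y₂ = c)
    (hl₁ : Linked σ τ j j' y₁ x₁) (hl₂ : Linked σ τ j j' y₂ x₂)
    (ha : ∀ x ∈ fiberOff σ j a, ¬ Linked σ τ j j' j' x) :
    IsSwapSet σ τ j j' a b c d
      (linkedSet σ τ j j' (insert j' (insert y₁ (fiberOff σ j d)))) (τ y₁) := by
  have hτ : τ y₁ ≠ τ y₂ := fun e => hne <| h.eq_of_linked_of_σ (.inl hx₁.2) (.inl hx₂.2)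
    (hl₁.symm.trans (h.injective_τ e ▸ hl₂))
  have hd {y x : ι} (hl : Linked σ τ j j' y x) (hx : x ≠ j) : τ y ≠ d := fun e =>
    hx (hl.eq_j_iff.mp (h.injective_τ (e.trans h.τ_j.symm)))
  have hd' {k : κ} (hk : k = b ∨ k = c) : d ≠ k := fun e =>
    (eq_or_eq_of_eq_or_eq hk hy₁ hy₂ hτ).elim (fun e' => hd hl₁ hx₁.1 (e'.symm.trans e.symm))
      (fun e' => hd hl₂ hx₂.1 (e'.symm.trans e.symm))
  have hdbc : d ≠ b ∧ d ≠ c := ⟨hd' (.inl rfl), hd' (.inr rfl)⟩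
  refine h.isSwapSet_source hdbc hx₁ hy₁ hl₁ ha fun x hx y hy hl => ?_
  refine (eq_or_eq_of_eq_or_eq hy hy₁ hy₂ hτ).resolve_right fun e => h.d_ne_a ?_
  have : x = x₂ := h.eq_of_linked_of_σ (.inr hx.2) (.inl hx₂.2)
    (hl.trans (h.injective_τ e ▸ hl₂))
  rw [← hx.2, ← hx₂.2, this]

theorem isSwapSet_b (h : ExchangeSetup σ τ j j' a b c d) {x₁ xd : ι}
    (hx₁ : x₁ ∈ fiberOff σ j a) (hxd : σ xd = d) (hlxd : Linked σ τ j j' j' xd)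
    (hbc : ∀ x ∈ fiberOff σ j a, ∀ y, (τ y = b ∨ τ y = c) → ¬ Linked σ τ j j' y x) :
    IsSwapSet σ τ j j' a b c d
      (linkedSet σ τ j j' (insert j' (insert x₁ (fiberOff τ j b)))) b := by
  set S := linkedSet σ τ j j' (insert j' (insert x₁ (fiberOff τ j b)))
  have hS {x : ι} : x ∈ S ↔ Linked σ τ j j' j' x ∨ Linked σ τ j j' x₁ x ∨
      ∃ s ∈ fiberOff τ j b, Linked σ τ j j' s x := by
    simp [S, mem_linkedSet]
  have hxdj : xd ≠ j := fun e => h.j'_ne_j (hlxd.eq_j_iff.mpr e)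
  have hjS : j ∉ insert j' (insert x₁ (fiberOff τ j b)) := by
    simp [h.j'_ne_j.symm, hx₁.1.symm, fiberOff]
  have hdb : d ≠ b := fun e => h.σ_ne_b xd hxdj (hxd.trans e)
  have hdc : d ≠ c := fun e => h.σ_ne_c xd hxdj (hxd.trans e)
  refine isSwapSet_linkedSet hjS (by simp) (.inr ⟨.inl rfl, hdb, hdc⟩) ?_ ?_ ?_ ?_
  · intro y hyj hy
    refine ⟨fun hyS => ?_, fun e => mem_linkedSet_of_mem (by simp [fiberOff, hyj, e])⟩
    rcases hS.mp hyS with hl | hl | ⟨s, hs, hl⟩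
    · exact absurd hl (h.not_linked_j'_of_bc hy)
    · exact absurd hl.symm (hbc x₁ hx₁ y hy)
    · rw [← h.eq_of_linked_of_bc (.inl hs.2) hy hl, hs.2]
  · intro x hxj hx
    have : x = xd := h.σ_injOn x xd hxj hxdj (hx.trans hxd.symm) (hx ▸ h.d_ne_a)
    exact iff_of_true (hS.mpr (.inl (this ▸ hlxd))) hdb.symm
  · suffices key : ∀ x ∈ S ∩ fiberOff σ j a, x = x₁ from
      fun x hx y hy => (key x hx).trans (key y hy).symm
    rintro x ⟨hxS, hx⟩
    rcases hS.mp hxS with hl | hl | ⟨s, hs, hl⟩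
    · have := h.eq_of_linked_of_σ (.inr hxd) (.inl hx.2) (hlxd.symm.trans hl)
      exact absurd (hxd.symm.trans (this ▸ hx.2)) h.d_ne_a
    · exact h.eq_of_linked_of_σ (.inl hx.2) (.inl hx₁.2) hl.symm
    · exact absurd hl (hbc x hx s (.inl hs.2))
  · exact fun _ => ⟨x₁, hS.mpr (.inr (.inl (EqvGen.refl x₁))), hx₁⟩

theorem exists_isSwapSet (h : ExchangeSetup σ τ j j' a b c d) :
    ∃ S z, IsSwapSet σ τ j j' a b c d S z := by
  -- If the path from `j'` ends at a row `xd` with `σ xd = d`, swapping it hands the unit of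
  -- column `d` to the new vote, so row `j` has to give up `d`.
  by_cases hjd : ∃ xd, Linked σ τ j j' j' xd ∧ σ xd = d
  · obtain ⟨xd, hlxd, hxd⟩ := hjd
    have ha : ∀ x ∈ fiberOff σ j a, ¬ Linked σ τ j j' j' x := fun x hx hl => h.d_ne_a <| by
      rw [← hxd, h.eq_of_linked_of_σ (.inr hxd) (.inl hx.2) (hlxd.symm.trans hl), hx.2]
    by_cases hsrc : ∃ x ∈ fiberOff σ j a, ∃ y, (τ y = b ∨ τ y = c) ∧ Linked σ τ j j' y x
    · obtain ⟨x₀, hx₀, y₀, hy₀, hl₀⟩ := hsrc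
      have hxdj : xd ≠ j := fun e => h.j'_ne_j (hlxd.eq_j_iff.mpr e)
      have hdbc : d ≠ b ∧ d ≠ c :=
        ⟨fun e => h.σ_ne_b xd hxdj (hxd.trans e), fun e => h.σ_ne_c xd hxdj (hxd.trans e)⟩
      refine ⟨_, _, h.isSwapSet_source hdbc hx₀ hy₀ hl₀ ha fun x hx y hy hl => ?_⟩
      have : x = xd := h.σ_injOn x xd hx.1 hxdj (hx.2.trans hxd.symm) (hx.2 ▸ h.d_ne_a)
      exact absurd (hlxd.trans (this ▸ hl)) (h.not_linked_j'_of_bc hy)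
    · push Not at hsrc
      obtain ⟨x₁, hx₁⟩ := h.nonempty_fiberOff_a
      exact ⟨_, _, h.isSwapSet_b hx₁ hxd hlxd fun x hx y hy => hsrc x hx y hy⟩
  push Not at hjd
  -- Now `t j = d` works unless column `a` needs one of its two `σ`-rows swapped and the paths
  -- through both start at `τ⁻¹ b` or `τ⁻¹ c`; then `t j` moves to the start of the first one.
  by_cases hj'a : (fiberOff σ j a).Nontrivial → ∃ x ∈ fiberOff σ j a, Linked σ τ j j' j' x
  · exact ⟨_, _, h.isSwapSet_j' hjd hj'a⟩
  push Not at hj'a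
  obtain ⟨⟨x₁, hx₁, x₂, hx₂, hne⟩, ha⟩ := hj'a
  by_cases h₁ : ∃ y₁, (τ y₁ = b ∨ τ y₁ = c) ∧ Linked σ τ j j' y₁ x₁
  · by_cases h₂ : ∃ y₂, (τ y₂ = b ∨ τ y₂ = c) ∧ Linked σ τ j j' y₂ x₂
    · obtain ⟨y₁, hy₁, hl₁⟩ := h₁
      obtain ⟨y₂, hy₂, hl₂⟩ := h₂
      exact ⟨_, _, h.isSwapSet_two_sources hx₁ hx₂ hne hy₁ hy₂ hl₁ hl₂ ha⟩
    · push Not at h₂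
      exact ⟨_, _, h.isSwapSet_j'_pair hx₂ hjd ha h₂⟩
  · push Not at h₁
    exact ⟨_, _, h.isSwapSet_j'_pair hx₁ hjd ha h₁⟩

theorem exists_isExchangeChoice (h : ExchangeSetup σ τ j j' a b c d) :
    ∃ t, IsExchangeChoice σ τ j j' a b c d t :=
  let ⟨_, _, hS⟩ := h.exists_isSwapSet
  ⟨_, hS.isExchangeChoice h⟩

end ExchangeSetup

end Exchange

theorem exists_eq_single_of_sum_eq_one {κ : Type*} [Fintype κ] [DecidableEq κ] {f : κ → ℤ}
    (hf : ∀ k, f k = 0 ∨ f k = 1) (hsum : ∑ k, f k = 1) : ∃ k, f = Pi.single k 1 := by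
  obtain ⟨k, hk⟩ : ∃ k, f k = 1 := by
    by_contra! hne
    rw [sum_eq_zero fun k _ => (hf k).resolve_right (hne k)] at hsum
    exact zero_ne_one hsum
  have hle : ∀ i ∈ univ, (Pi.single k 1 : κ → ℤ) i ≤ f i := by
    intro i _
    rcases eq_or_ne i k with rfl | hi
    · simp [hk]
    · rcases hf i with h | h <;> simp [hi, h]
  refine ⟨k, funext fun i => ?_⟩
  exact ((sum_eq_sum_iff_of_le hle).mp (by simp [hsum]) i (mem_univ i)).symm

section Votes

variable {r n : ℕ}

def unitRows (t : Fin r → Fin n) : Matrix (Fin r) (Fin n) ℤ :=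
  fun i => Pi.single (t i) 1

theorem unitRows_apply (t : Fin r → Fin n) (i : Fin r) (k : Fin n) :
    unitRows t i k = if t i = k then 1 else 0 := by
  simp [unitRows, Pi.single_apply, eq_comm]

theorem sum_unitRows_apply (t : Fin r → Fin n) (k : Fin n) :
    ∑ i, unitRows t i k = #{i | t i = k} := by
  simp [unitRows_apply, sum_boole]

theorem card_le_one_of_injective {t : Fin r → Fin n} (ht : Injective t) (k : Fin n) :
    #{i | t i = k} ≤ 1 :=
  card_le_one.mpr fun x hx y hy => ht <| by
    simp only [mem_filter, mem_univ, true_and] at hx hy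
    rw [hx, hy]

theorem card_pos_iff_mem_range {t : Fin r → Fin n} {k : Fin n} :
    0 < #{i | t i = k} ↔ k ∈ Set.range t := by
  simp [card_pos, filter_nonempty_iff]

theorem isProperVote_unitRows {t : Fin r → Fin n} (ht : Injective t) :
    IsProperVote r n (unitRows t) := by
  refine ⟨fun i k => ?_, fun i => by simp [unitRows], fun k => ?_⟩
  · rw [unitRows_apply]
    split_ifs <;> simp
  · have := card_le_one_of_injective ht k
    rw [sum_unitRows_apply]
    omega

theorem IsProperVote.exists_eq_unitRows {V : Matrix (Fin r) (Fin n) ℤ}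
    (hV : IsProperVote r n V) : ∃ t, Injective t ∧ V = unitRows t := by
  choose t ht using fun i => exists_eq_single_of_sum_eq_one (hV.1 i) (hV.2.1 i)
  have hVt : V = unitRows t := funext ht
  refine ⟨t, fun x y hxy => ?_, hVt⟩
  have hcard : #{i | t i = t x} ≤ 1 := by
    have := hV.2.2 (t x)
    rw [hVt, sum_unitRows_apply] at this
    omega
  exact card_le_one.mp hcard x (by simp) y (by simp [hxy])

end Votes

section Improper

variable {r n : ℕ} {V : Matrix (Fin r) (Fin n) ℤ} {σ τ t : Fin r → Fin n} {j j' : Fin r}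
  {a b c d : Fin n}

theorem IsImproperVote.zero_or_one_of_ne (hV : IsImproperVote r n V) (hja : V j a = -1)
    {i : Fin r} {k : Fin n} (hik : (i, k) ≠ (j, a)) : V i k = 0 ∨ V i k = 1 := by
  obtain ⟨-, -, j₀, k₀, -, h01⟩ := hV
  have : (j, a) = (j₀, k₀) := by
    by_contra hne
    rcases h01 j a hne with h | h <;> rw [hja] at h <;> norm_num at h
  exact h01 i k (this ▸ hik)

theorem IsImproperVote.exists_rows_eq_single (hV : IsImproperVote r n V) (hja : V j a = -1) :
    ∃ σ : Fin r → Fin n, ∀ i, i ≠ j → V i = Pi.single (σ i) 1 := by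
  have (i : Fin r) : ∃ k, i ≠ j → V i = Pi.single k 1 := by
    by_cases hi : i = j
    · exact ⟨a, fun h => absurd hi h⟩
    · obtain ⟨k, hk⟩ := exists_eq_single_of_sum_eq_one
        (fun k => hV.zero_or_one_of_ne hja (by simp [hi])) (hV.1 i)
      exact ⟨k, fun _ => hk⟩
  choose σ hσ using this
  exact ⟨σ, hσ⟩

theorem IsImproperVote.row_eq (hV : IsImproperVote r n V) (hja : V j a = -1)
    (hjb : V j b = 1) (hjc : V j c = 1) (hab : a ≠ b) (hac : a ≠ c) (hbc : b ≠ c) :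
    V j = Pi.single b 1 + Pi.single c 1 - Pi.single a 1 := by
  have hle : ∀ k ∈ univ, (Pi.single b 1 + Pi.single c 1 - Pi.single a 1 : Fin n → ℤ) k ≤ V j k := by
    intro k _
    by_cases hka : k = a
    · simp [hka, hab, hac, hja]
    have := hV.zero_or_one_of_ne hja (i := j) (k := k) (by simp [hka])
    by_cases hkb : k = b
    · simp [hkb, hbc, hab.symm, hjb]
    by_cases hkc : k = c
    · simp [hkc, hbc.symm, hac.symm, hjc]
    · simp [hka, hkb, hkc]
      omega
  funext k
  refine ((sum_eq_sum_iff_of_le hle).mp ?_ k (mem_univ k)).symm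
  simp [sum_add_distrib, sum_sub_distrib, hV.1 j]

theorem sum_apply_eq_add_card (hσ : ∀ i, i ≠ j → V i = Pi.single (σ i) 1) (k : Fin n) :
    ∑ i, V i k = V j k + #{i | i ≠ j ∧ σ i = k} := by
  have (i : Fin r) : V i k = (if i = j then V j k else 0) + if i ≠ j ∧ σ i = k then 1 else 0 := by
    by_cases hi : i = j
    · rw [hi]
      simp
    · simp [hi, hσ i hi, Pi.single_apply, eq_comm]
  rw [sum_congr rfl fun i _ => this i, sum_add_distrib, sum_ite_eq', sum_boole]
  simp

theorem exchangeSetup_of_rows (hV : IsImproperVote r n V)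
    (hσ : ∀ i, i ≠ j → V i = Pi.single (σ i) 1) (hja : V j a = -1) (hjb : V j b = 1)
    (hjc : V j c = 1) (hab : a ≠ b) (hac : a ≠ c) (hbc : b ≠ c) (hτ : Injective τ)
    (hτj : τ j = d) (hτj' : τ j' = a) (hjj' : j' ≠ j) :
    ExchangeSetup σ τ j j' a b c d := by
  have hcol (k : Fin n) := sum_apply_eq_add_card hσ k
  have hmem {x : Fin r} {k : Fin n} (hx : x ≠ j) (hxk : σ x = k) :
      x ∈ ({i | i ≠ j ∧ σ i = k} : Finset (Fin r)) := by simp [hx, hxk]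
  have hne {x : Fin r} {k : Fin n} (hx : x ≠ j) (hxk : σ x = k) (hjk : V j k = 1) : False := by
    have h₁ := hcol k
    have h₂ := card_pos.mpr ⟨x, hmem hx hxk⟩
    rcases hV.2.1 k with h | h <;> omega
  refine ⟨hτ, hτj, hτj', hjj', hab, hac, hbc, fun x hx hxb => hne hx hxb hjb,
    fun x hx hxc => hne hx hxc hjc, fun x y hx hy hxy hxa => ?_, ?_⟩
  · have hle : #{i | i ≠ j ∧ σ i = σ x} ≤ 1 := by
      have h₁ := hcol (σ x)
      rcases hV.zero_or_one_of_ne hja (i := j) (k := σ x) (by simp [hxa]) with h | h <;>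
        rcases hV.2.1 (σ x) with h' | h' <;> omega
    exact card_le_one.mp hle x (hmem hx rfl) y (hmem hy hxy.symm)
  · have hpos : 0 < #{i | i ≠ j ∧ σ i = a} := by
      have h₁ := hcol a
      rcases hV.2.1 a with h | h <;> omega
    obtain ⟨x, hx⟩ := card_pos.mp hpos
    simp only [mem_filter, mem_univ, true_and] at hx
    exact ⟨x, hx⟩

theorem unitRows_apply_eq_one_iff {i : Fin r} {k : Fin n} : unitRows t i k = 1 ↔ t i = k := by
  rw [unitRows_apply]
  split_ifs <;> simp [*]

theorem exchange_row_j (hVj : V j = Pi.single b 1 + Pi.single c 1 - Pi.single a 1)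
    (h : ExchangeSetup σ τ j j' a b c d) (ht : IsExchangeChoice σ τ j j' a b c d t) :
    ∃ u v, u ≠ v ∧ u ≠ a ∧ v ≠ a ∧
      (V + unitRows τ - unitRows t) j = Pi.single u 1 + Pi.single v 1 - Pi.single a 1 ∧
      ((u = b ∧ v = c) ∨ (u = b ∧ v = d) ∨ (u = c ∧ v = d)) := by
  have hrow : (V + unitRows τ - unitRows t) j = Pi.single b 1 + Pi.single c 1 -
      Pi.single a 1 + Pi.single d 1 - Pi.single (t j) 1 := by
    funext k
    simp [unitRows, hVj, h.τ_j]
  rcases ht.apply_j with htj | ⟨htj | htj, hdb, hdc⟩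
  · exact ⟨b, c, h.b_ne_c, h.a_ne_b.symm, h.a_ne_c.symm, by rw [hrow, htj]; abel, .inl ⟨rfl, rfl⟩⟩
  · exact ⟨c, d, hdc.symm, h.a_ne_c.symm, h.d_ne_a, by rw [hrow, htj]; abel,
      .inr (.inr ⟨rfl, rfl⟩)⟩
  · exact ⟨b, d, hdb.symm, h.a_ne_b.symm, h.d_ne_a, by rw [hrow, htj]; abel,
      .inr (.inl ⟨rfl, rfl⟩)⟩

theorem exchange_row_of_ne (hσ : ∀ i, i ≠ j → V i = Pi.single (σ i) 1)
    (ht : IsExchangeChoice σ τ j j' a b c d t) {i : Fin r} (hi : i ≠ j) :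
    ∃ u, (V + unitRows τ - unitRows t) i = Pi.single u 1 := by
  rcases ht.apply_of_ne i hi with h | h
  · exact ⟨τ i, funext fun k => by simp [unitRows, hσ i hi, h]⟩
  · exact ⟨σ i, funext fun k => by simp [unitRows, hσ i hi, h]⟩

theorem single_apply_eq_zero_or_one (u k : Fin n) :
    (Pi.single u 1 : Fin n → ℤ) k = 0 ∨ (Pi.single u 1 : Fin n → ℤ) k = 1 := by
  rw [Pi.single_apply]
  split_ifs <;> simp

theorem τ_mem_range_of_sum_eq_one (hσ : ∀ i, i ≠ j → V i = Pi.single (σ i) 1)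
    (hVj : V j = Pi.single b 1 + Pi.single c 1 - Pi.single a 1)
    (ht : IsExchangeChoice σ τ j j' a b c d t) {y : Fin r} (hy : ∑ i, V i (τ y) = 1) :
    τ y ∈ Set.range t := by
  by_cases hbc : τ y = b ∨ τ y = c
  · exact ht.τ_mem_range_of_bc y hbc
  push Not at hbc
  rw [sum_apply_eq_add_card hσ, hVj] at hy
  by_cases hya : τ y = a
  · rw [hya] at hy ⊢
    rw [hya] at hbc
    simp only [Pi.add_apply, Pi.sub_apply, Pi.single_apply, if_neg hbc.1, if_neg hbc.2,
      if_pos] at hy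
    obtain ⟨x, hx, x', hx', hne⟩ := one_lt_card.mp (by omega : 1 < #{i | i ≠ j ∧ σ i = a})
    exact ht.a_mem_range ⟨x, by simpa [fiberOff] using hx, x', by simpa [fiberOff] using hx', hne⟩
  · simp only [Pi.add_apply, Pi.sub_apply, Pi.single_apply, if_neg hbc.1, if_neg hbc.2,
      if_neg hya] at hy
    obtain ⟨x, hx⟩ := card_pos.mp (by omega : 0 < #{i | i ≠ j ∧ σ i = τ y})
    simp only [mem_filter, mem_univ, true_and] at hx
    exact ht.τ_mem_range_of_σ x y hx.1 hx.2 hya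

theorem sum_exchange_apply (k : Fin n) :
    ∑ i, (V + unitRows τ - unitRows t) i k = ∑ i, V i k + #{i | τ i = k} - #{i | t i = k} := by
  simp [sum_add_distrib, sum_sub_distrib, sum_unitRows_apply]

theorem exchange_apply_eq_zero_or_one (hσ : ∀ i, i ≠ j → V i = Pi.single (σ i) 1)
    (hVj : V j = Pi.single b 1 + Pi.single c 1 - Pi.single a 1)
    (h : ExchangeSetup σ τ j j' a b c d) (ht : IsExchangeChoice σ τ j j' a b c d t)
    {i : Fin r} {k : Fin n} (hik : (i, k) ≠ (j, a)) :
    (V + unitRows τ - unitRows t) i k = 0 ∨ (V + unitRows τ - unitRows t) i k = 1 := by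
  by_cases hi : i = j
  · obtain ⟨u, v, huv, -, -, hrow, -⟩ := exchange_row_j hVj h ht
    have hka : k ≠ a := fun hk => hik (by rw [hi, hk])
    rw [hi, congrFun hrow k]
    by_cases hku : k = u <;> by_cases hkv : k = v <;> simp_all
  · obtain ⟨u, hu⟩ := exchange_row_of_ne hσ ht hi
    rw [congrFun hu k]
    exact single_apply_eq_zero_or_one u k

theorem sum_exchange_apply_eq_zero_or_one (hV : IsImproperVote r n V)
    (hσ : ∀ i, i ≠ j → V i = Pi.single (σ i) 1)
    (hVj : V j = Pi.single b 1 + Pi.single c 1 - Pi.single a 1)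
    (h : ExchangeSetup σ τ j j' a b c d) (ht : IsExchangeChoice σ τ j j' a b c d t) (k : Fin n) :
    ∑ i, (V + unitRows τ - unitRows t) i k = 0 ∨ ∑ i, (V + unitRows τ - unitRows t) i k = 1 := by
  have hlow : 0 ≤ ∑ i, (V + unitRows τ - unitRows t) i k := by
    by_cases hka : k = a
    · have hτ : 0 < #{i | τ i = k} := card_pos_iff_mem_range.mpr ⟨j', hka ▸ h.τ_j'⟩
      have := card_le_one_of_injective ht.injective k
      rw [sum_exchange_apply]
      rcases hV.2.1 k with h₀ | h₀ <;> omega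
    · refine sum_nonneg fun i _ => ?_
      rcases exchange_apply_eq_zero_or_one hσ hVj h ht (i := i) (k := k) (by simp [hka])
        with h₀ | h₀ <;> simp [h₀]
  rw [sum_exchange_apply] at hlow ⊢
  have hτk := card_le_one_of_injective h.injective_τ k
  have htk := card_le_one_of_injective ht.injective k
  by_cases h₁ : ∑ i, V i k = 1 <;> by_cases hτ : 0 < #{i | τ i = k}
  · obtain ⟨y, rfl⟩ := card_pos_iff_mem_range.mp hτ
    have := card_pos_iff_mem_range.mpr (τ_mem_range_of_sum_eq_one hσ hVj ht h₁)
    omega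
  all_goals rcases hV.2.1 k with h₀ | h₀ <;> omega

theorem isImproperVote_exchange (hV : IsImproperVote r n V)
    (hσ : ∀ i, i ≠ j → V i = Pi.single (σ i) 1)
    (hVj : V j = Pi.single b 1 + Pi.single c 1 - Pi.single a 1)
    (h : ExchangeSetup σ τ j j' a b c d) (ht : IsExchangeChoice σ τ j j' a b c d t) :
    IsImproperVote r n (V + unitRows τ - unitRows t) := by
  refine ⟨fun i => by simp [sum_add_distrib, sum_sub_distrib, hV.1 i, unitRows],
    sum_exchange_apply_eq_zero_or_one hV hσ hVj h ht, j, a, ?_,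
    fun i k hik => exchange_apply_eq_zero_or_one hσ hVj h ht hik⟩
  obtain ⟨u, v, -, hua, hva, hrow, -⟩ := exchange_row_j hVj h ht
  simp [congrFun hrow a, hua.symm, hva.symm]

end Improper

theorem improper_move_a_up_general
    (r n : ℕ)
    (V₁ V₂ : Matrix (Fin r) (Fin n) ℤ)
    (h₁ : IsImproperVote r n V₁) (h₂ : IsProperVote r n V₂)
    (j j' : Fin r) (a b c d : Fin n)
    (hab : a ≠ b) (hac : a ≠ c) (hbc : b ≠ c)
    (h1b : V₁ j b = 1) (h1c : V₁ j c = 1) (h1a : V₁ j a = -1)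
    (hjj' : j' ≠ j) (h2a : V₂ j' a = 1)
    (h2d : V₂ j d = 1) :
    ∃ V₁' V₂' : Matrix (Fin r) (Fin n) ℤ,
      IsImproperVote r n V₁' ∧ IsProperVote r n V₂' ∧
      V₁' + V₂' = V₁ + V₂ ∧
      V₁' j' a = 1 ∧ V₁' j a = -1 ∧
      ((V₁' j b = 1 ∧ V₁' j c = 1) ∨
       (V₁' j b = 1 ∧ V₁' j d = 1) ∨
       (V₁' j c = 1 ∧ V₁' j d = 1)) := by
  obtain ⟨τ, hτ, rfl⟩ := h₂.exists_eq_unitRows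
  obtain ⟨σ, hσ⟩ := h₁.exists_rows_eq_single h1a
  have hVj := h₁.row_eq h1a h1b h1c hab hac hbc
  have h := exchangeSetup_of_rows h₁ hσ h1a h1b h1c hab hac hbc hτ
    (unitRows_apply_eq_one_iff.mp h2d) (unitRows_apply_eq_one_iff.mp h2a) hjj'
  obtain ⟨t, ht⟩ := h.exists_isExchangeChoice
  obtain ⟨u, v, huv, hua, hva, hrow, hpat⟩ := exchange_row_j hVj h ht
  have hj (k : Fin n) := congrFun hrow k
  refine ⟨V₁ + unitRows τ - unitRows t, unitRows t, isImproperVote_exchange h₁ hσ hVj h ht,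
    isProperVote_unitRows ht.injective, sub_add_cancel _ _, ?_, ?_, ?_⟩
  · simp [unitRows, hσ j' hjj', ht.apply_j', h.τ_j']
  · simp [hj, hua.symm, hva.symm]
  · rcases hpat with ⟨rfl, rfl⟩ | ⟨rfl, rfl⟩ | ⟨rfl, rfl⟩ <;> simp [hj, huv, huv.symm, hua, hva]

/-- Let `1 ≤ r ≤ n`, let `V₁` be an improper vote whose row `j` has
entries `1` in columns `b` and `c` and entry `-1` in column `a` (with `a,b,c` distinct),
and let `V₂` be a proper vote with entry `1` at `(j', a)` for some `j' ≠ j` and entry `1`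
at `(j, d)` for some `d ≠ a`. Then there are an improper vote `V₁'` and a proper vote
`V₂'` with `V₁' + V₂' = V₁ + V₂`, `V₁'` having entry `1` at `(j', a)`, and row `j` of
`V₁'` having entry `-1` in column `a` and entries `1` in exactly two columns forming one
of the sets `{b,c}`, `{b,d}`, `{c,d}`. -/
theorem improper_move_a_up
    (r n : ℕ) (hr : 1 ≤ r) (hrn : r ≤ n)
    (V₁ V₂ : Matrix (Fin r) (Fin n) ℤ)
    (h₁ : IsImproperVote r n V₁) (h₂ : IsProperVote r n V₂)
    (j j' : Fin r) (a b c d : Fin n)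
    (hab : a ≠ b) (hac : a ≠ c) (hbc : b ≠ c)
    (h1b : V₁ j b = 1) (h1c : V₁ j c = 1) (h1a : V₁ j a = -1)
    (hjj' : j' ≠ j) (h2a : V₂ j' a = 1)
    (hda : d ≠ a) (h2d : V₂ j d = 1) :
    ∃ V₁' V₂' : Matrix (Fin r) (Fin n) ℤ,
      IsImproperVote r n V₁' ∧ IsProperVote r n V₂' ∧
      V₁' + V₂' = V₁ + V₂ ∧
      V₁' j' a = 1 ∧ V₁' j a = -1 ∧
      ((V₁' j b = 1 ∧ V₁' j c = 1) ∨
       (V₁' j b = 1 ∧ V₁' j d = 1) ∨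
       (V₁' j c = 1 ∧ V₁' j d = 1)) :=
  improper_move_a_up_general r n V₁ V₂ h₁ h₂ j j' a b c d hab hac hbc h1b h1c h1a hjj' h2a h2d
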